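/- Let d ≥ 1 and r, s, m ≥ 0. For each i ∈ [m] let R_i ⊆ U_d^{r_i} be a relation and let z_i : [r_i] → [r + s] be a choice of coordinates, and let R ⊆ U_d^r be the relation defined by: (a_1, …, a_r) ∈ R if and only if there exist b_1, …, b_s ∈ U_d such that for every i ∈ [m] the tuple (c_{z_i(1)}, …, c_{z_i(r_i)}) belongs to R_i, where (c_1, …, c_{r+s}) = (a_1, …, a_r, b_1, …, b_s). For each relation Q ⊆ U_d^t fix a polynomial P_Q ∈ ℂ[x_1,…,x_t] representing Q. Let H be a complex Hilbert space and let C_1, …, C_{r+s} be bounded normal linear operators on H with C_j^d = I for all j, such that all of C_1, …, C_{r+s} pairwise commute and for every i ∈ [m] one has P_{R_i}(C_{z_i(1)}, …, C_{z_i(r_i)}) = I. Then P_R(C_1, …, C_r) = I. -/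

import Mathlib

/-!
Because `X ^ d - 1` has `d` simple roots, an element with `C ^ d = 1` splits along the polynomial
projections `e_λ(C) = d⁻¹ ∑_{l < d} (λ⁻¹ C) ^ l`, `λ ∈ U_d`, which sum to `1` and satisfy
`C e_λ(C) = λ e_λ(C)`. For commuting `C_1, …, C_n` the products `E_a = ∏_j e_{a_j}(C_j)`,
`a ∈ U_d^n`, sum to `1`, and a polynomial acts on `E_a` as multiplication by its value at `a`.
So `E_a = 0` unless `a` satisfies every constraint `P_{R_i} = 1`; at the remaining points
`P_R(a) = 1`, whence `P_R(C) = ∑_a P_R(C) E_a = ∑_a E_a = 1`.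
-/

open scoped BigOperators

/-- Evaluation of a multivariate polynomial over `ℂ` at a family of (pairwise commuting)
elements of a `ℂ`-algebra, defined by summing monomials. -/
noncomputable def mvEval {r : ℕ} {A : Type*} [Ring A] [Algebra ℂ A]
    (f : Fin r → A) (Q : MvPolynomial (Fin r) ℂ) : A :=
  ∑ m ∈ Q.support, Q.coeff m • (List.ofFn (fun i => f i ^ (m i))).prod

open MvPolynomial Finset

theorem mvEval_map {r : ℕ} {A B F : Type*} [Ring A] [Algebra ℂ A] [Ring B] [Algebra ℂ B]
    [FunLike F A B] [AlgHomClass F ℂ A B] (φ : F) (f : Fin r → A) (Q : MvPolynomial (Fin r) ℂ) :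
    φ (mvEval f Q) = mvEval (fun i => φ (f i)) Q := by
  simp only [mvEval, map_sum, map_smul, map_list_prod, List.map_ofFn, Function.comp_def, map_pow]

theorem mvEval_eq_aeval {r : ℕ} {B : Type*} [CommRing B] [Algebra ℂ B] (f : Fin r → B)
    (Q : MvPolynomial (Fin r) ℂ) : mvEval f Q = aeval f Q := by
  simp only [mvEval, aeval_def, eval₂_eq', List.prod_ofFn, Algebra.smul_def]

theorem AddChar.zmod_apply_pow_eq_one {d : ℕ} {M : Type*} [Monoid M] (ψ : AddChar (ZMod d) M)
    (k : ZMod d) : ψ k ^ d = 1 := by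
  rw [← AddChar.map_nsmul_eq_pow, nsmul_eq_mul, ZMod.natCast_self, zero_mul,
    AddChar.map_zero_eq_one]

section RootProjection

variable {A : Type*} [Ring A] [Algebra ℂ A] {d : ℕ}

noncomputable def rootProjection (ψ : AddChar (ZMod d) ℂ) (x : A) (k : ZMod d) : A :=
  (d : ℂ)⁻¹ • ∑ l ∈ range d, (ψ (-k) • x) ^ l

theorem mul_rootProjection (ψ : AddChar (ZMod d) ℂ) {x : A} (hx : x ^ d = 1) (k : ZMod d) :
    x * rootProjection ψ x k = ψ k • rootProjection ψ x k := by
  set y := ψ (-k) • x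
  have hy : y ^ d = 1 := by rw [smul_pow, hx, AddChar.zmod_apply_pow_eq_one, one_smul]
  have hxy : x = ψ k • y := by
    rw [smul_smul, ← AddChar.map_add_eq_mul, add_neg_cancel, AddChar.map_zero_eq_one, one_smul]
  have hgeom : y * ∑ l ∈ range d, y ^ l = ∑ l ∈ range d, y ^ l := by
    have := mul_geom_sum y d
    rwa [hy, sub_self, sub_mul, one_mul, sub_eq_zero] at this
  calc x * ((d : ℂ)⁻¹ • ∑ l ∈ range d, y ^ l)
      = (d : ℂ)⁻¹ • (ψ k • (y * ∑ l ∈ range d, y ^ l)) := by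
        rw [mul_smul_comm, hxy, smul_mul_assoc]
    _ = ψ k • ((d : ℂ)⁻¹ • ∑ l ∈ range d, y ^ l) := by rw [hgeom, smul_comm]

theorem sum_rootProjection [NeZero d] {ψ : AddChar (ZMod d) ℂ} (hψ : ψ.IsPrimitive) (x : A) :
    ∑ k, rootProjection ψ x k = 1 := by
  classical
  have hchar : ∀ l ∈ range d, ∑ k : ZMod d, ψ (-k) ^ l = if l = 0 then (d : ℂ) else 0 := by
    intro l hl
    have hshift : ∀ k : ZMod d, ψ (-k) ^ l = ψ (k * -(l : ZMod d)) := fun k => by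
      rw [← AddChar.map_nsmul_eq_pow, nsmul_eq_mul]; ring_nf
    have hdvd : d ∣ l ↔ l = 0 :=
      ⟨fun h => Nat.eq_zero_of_dvd_of_lt h (mem_range.1 hl), fun h => h ▸ dvd_zero d⟩
    simp_rw [hshift, AddChar.sum_mulShift _ hψ, neg_eq_zero, ZMod.natCast_eq_zero_iff, ZMod.card]
    simp only [hdvd]
    split_ifs <;> simp
  simp_rw [rootProjection, ← smul_sum, smul_pow]
  rw [sum_comm]
  simp_rw [← sum_smul]
  rw [sum_congr rfl fun l hl => by rw [hchar l hl]]
  simp [ite_smul, NeZero.ne]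

end RootProjection

section JointRootProjection

variable {B : Type*} [CommRing B] [Algebra ℂ B] {d : ℕ} {σ : Type*} [Fintype σ]

noncomputable def jointRootProjection (ψ : AddChar (ZMod d) ℂ) (f : σ → B) (a : σ → ZMod d) : B :=
  ∏ j, rootProjection ψ (f j) (a j)

theorem sum_jointRootProjection [NeZero d] [DecidableEq σ] {ψ : AddChar (ZMod d) ℂ}
    (hψ : ψ.IsPrimitive) (f : σ → B) : ∑ a, jointRootProjection ψ f a = 1 := by
  simp only [jointRootProjection, ← Fintype.prod_sum, sum_rootProjection hψ, prod_const_one]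

theorem mul_jointRootProjection (ψ : AddChar (ZMod d) ℂ) {f : σ → B} (hf : ∀ j, f j ^ d = 1)
    (a : σ → ZMod d) (j : σ) :
    f j * jointRootProjection ψ f a = ψ (a j) • jointRootProjection ψ f a := by
  classical
  rw [jointRootProjection, ← mul_prod_erase univ _ (mem_univ j), ← mul_assoc,
    mul_rootProjection ψ (hf j), smul_mul_assoc]

end JointRootProjection

theorem aeval_mul_eq_eval_smul {σ B : Type*} [CommRing B] [Algebra ℂ B] {f : σ → B} {x : σ → ℂ}
    {E : B} (hE : ∀ j, f j * E = x j • E) (Q : MvPolynomial σ ℂ) :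
    aeval f Q * E = eval x Q • E := by
  induction Q using MvPolynomial.induction_on with
  | C c => rw [aeval_C, eval_C, Algebra.smul_def]
  | add p q hp hq => rw [map_add, map_add, add_mul, hp, hq, add_smul]
  | mul_X p j hp =>
    rw [map_mul, aeval_X, mul_assoc, hE, mul_smul_comm, hp, map_mul, eval_X, mul_smul, smul_comm]

theorem aeval_eq_one_of_forall_eval_eq_one {B : Type*} [CommRing B] [Algebra ℂ B] {d : ℕ}
    [NeZero d] {σ ι : Type*} [Fintype σ] {f : σ → B} (hf : ∀ j, f j ^ d = 1)
    {Ps : ι → MvPolynomial σ ℂ} (hPs : ∀ i, aeval f (Ps i) = 1) {P : MvPolynomial σ ℂ}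
    (hP : ∀ x : σ → ℂ, (∀ j, x j ^ d = 1) → (∀ i, eval x (Ps i) = 1) → eval x P = 1) :
    aeval f P = 1 := by
  classical
  set ψ := ZMod.stdAddChar (N := d)
  set E := jointRootProjection ψ f
  have hE : ∀ a j, f j * E a = ψ (a j) • E a := mul_jointRootProjection ψ hf
  have hterm : ∀ a, aeval f P * E a = E a := by
    intro a
    rw [aeval_mul_eq_eval_smul (hE a)]
    by_cases hsat : ∀ i, eval (fun j => ψ (a j)) (Ps i) = 1
    · rw [hP _ (fun j => ψ.zmod_apply_pow_eq_one (a j)) hsat, one_smul]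
    · obtain ⟨i, hi⟩ := not_forall.1 hsat
      have hfix : E a = eval (fun j => ψ (a j)) (Ps i) • E a := by
        rw [← aeval_mul_eq_eval_smul (hE a), hPs i, one_mul]
      have hzero : E a = 0 := by
        have : (1 - eval (fun j => ψ (a j)) (Ps i)) • E a = 0 := by
          rw [sub_smul, one_smul, ← hfix, sub_self]
        exact (smul_eq_zero.1 this).resolve_left (sub_ne_zero.2 (Ne.symm hi))
      rw [hzero, smul_zero]
  have hsum : ∑ a, E a = 1 := sum_jointRootProjection (ZMod.isPrimitive_stdAddChar d) f
  calc aeval f P = aeval f P * ∑ a, E a := by rw [hsum, mul_one]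
    _ = ∑ a, E a := by rw [mul_sum]; exact sum_congr rfl fun a _ => hterm a
    _ = 1 := hsum

def Represents (d : ℕ) {n : ℕ} (Q : Set (Fin n → ℂ)) (P : MvPolynomial (Fin n) ℂ) : Prop :=
  ∀ a : Fin n → ℂ, (∀ j, a j ^ d = 1) →
    (a ∈ Q → eval a P = 1) ∧ (a ∉ Q → eval a P = Complex.exp (2 * Real.pi * Complex.I / d))

theorem Represents.eval_eq_one_iff {d n : ℕ} {Q : Set (Fin n → ℂ)} {P : MvPolynomial (Fin n) ℂ}
    (hP : Represents d Q P) {a : Fin n → ℂ} (ha : ∀ j, a j ^ d = 1) :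
    eval a P = 1 ↔ a ∈ Q ∨ Complex.exp (2 * Real.pi * Complex.I / d) = 1 := by
  by_cases haQ : a ∈ Q
  · simp [(hP a ha).1 haQ, haQ]
  · simp [(hP a ha).2 haQ, haQ]

theorem stmt16_general (d r s m : ℕ) (hd : 1 ≤ d)
    (ar : Fin m → ℕ)
    (Rel : (i : Fin m) → Set (Fin (ar i) → ℂ))
    (z : (i : Fin m) → Fin (ar i) → Fin (r + s))
    (R : Set (Fin r → ℂ))
    (hR : ∀ a : Fin r → ℂ, (∀ j, a j ^ d = 1) →
      (a ∈ R ↔ ∃ b : Fin s → ℂ, (∀ j, b j ^ d = 1) ∧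
        ∀ i, (fun t => Fin.append a b (z i t)) ∈ Rel i))
    (PR : (i : Fin m) → MvPolynomial (Fin (ar i)) ℂ)
    (hPR : ∀ i, ∀ a : Fin (ar i) → ℂ, (∀ t, a t ^ d = 1) →
      ((a ∈ Rel i → MvPolynomial.eval a (PR i) = 1) ∧
       (a ∉ Rel i → MvPolynomial.eval a (PR i) = Complex.exp (2 * Real.pi * Complex.I / d))))
    (P : MvPolynomial (Fin r) ℂ)
    (hP : ∀ a : Fin r → ℂ, (∀ j, a j ^ d = 1) →
      ((a ∈ R → MvPolynomial.eval a P = 1) ∧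
       (a ∉ R → MvPolynomial.eval a P = Complex.exp (2 * Real.pi * Complex.I / d))))
    {H : Type*} [NormedAddCommGroup H] [InnerProductSpace ℂ H]
    (C : Fin (r + s) → (H →L[ℂ] H))
    (hcomm : ∀ i j, C i * C j = C j * C i)
    (horder : ∀ i, C i ^ d = 1)
    (hsat : ∀ i, mvEval (fun t => C (z i t)) (PR i) = 1) :
    mvEval (fun j : Fin r => C (Fin.castAdd s j)) P = 1 := by
  have : NeZero d := ⟨by omega⟩
  let B := Algebra.adjoin ℂ (Set.range C)
  let _ : CommRing B := { B.toRing with mul_comm := (Algebra.isMulCommutative_adjoin ℂ (by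
    rintro _ ⟨i, rfl⟩ _ ⟨j, rfl⟩
    exact hcomm i j)).is_comm.comm }
  let C' : Fin (r + s) → B := fun j => ⟨C j, Algebra.subset_adjoin ⟨j, rfl⟩⟩
  have hC' : ∀ {n} (g : Fin n → Fin (r + s)) (Q : MvPolynomial (Fin n) ℂ),
      mvEval (fun t => C (g t)) Q = (aeval (C' ∘ g) Q : B) := fun g Q => by
    rw [← mvEval_eq_aeval]
    exact (mvEval_map B.val (C' ∘ g) Q).symm
  suffices h : aeval C' (rename (Fin.castAdd s) P) = 1 by rw [hC', ← aeval_rename, h]; rfl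
  refine aeval_eq_one_of_forall_eval_eq_one (fun j => Subtype.ext (horder j))
    (Ps := fun i => rename (z i) (PR i)) (fun i => Subtype.ext ?_) fun x hx hsatx => ?_
  · rw [aeval_rename, ← hC']; exact hsat i
  simp only [eval_rename, Function.comp_def] at hsatx ⊢
  rw [Represents.eval_eq_one_iff hP fun j => hx _]
  refine or_iff_not_imp_right.2 fun hω => (hR _ fun j => hx _).2
    ⟨fun j => x (Fin.natAdd r j), fun j => hx _, fun i => ?_⟩
  rw [Fin.append_castAdd_natAdd]
  exact ((Represents.eval_eq_one_iff (hPR i) fun t => hx _).1 (hsatx i)).resolve_right hω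

theorem stmt16 (d r s m : ℕ) (hd : 1 ≤ d)
    (ar : Fin m → ℕ)
    (Rel : (i : Fin m) → Set (Fin (ar i) → ℂ))
    (z : (i : Fin m) → Fin (ar i) → Fin (r + s))
    (R : Set (Fin r → ℂ))
    (hR : ∀ a : Fin r → ℂ, (∀ j, a j ^ d = 1) →
      (a ∈ R ↔ ∃ b : Fin s → ℂ, (∀ j, b j ^ d = 1) ∧
        ∀ i, (fun t => Fin.append a b (z i t)) ∈ Rel i))
    (PR : (i : Fin m) → MvPolynomial (Fin (ar i)) ℂ)
    (hPR : ∀ i, ∀ a : Fin (ar i) → ℂ, (∀ t, a t ^ d = 1) →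
      ((a ∈ Rel i → MvPolynomial.eval a (PR i) = 1) ∧
       (a ∉ Rel i → MvPolynomial.eval a (PR i) = Complex.exp (2 * Real.pi * Complex.I / d))))
    (P : MvPolynomial (Fin r) ℂ)
    (hP : ∀ a : Fin r → ℂ, (∀ j, a j ^ d = 1) →
      ((a ∈ R → MvPolynomial.eval a P = 1) ∧
       (a ∉ R → MvPolynomial.eval a P = Complex.exp (2 * Real.pi * Complex.I / d))))
    {H : Type*} [NormedAddCommGroup H] [InnerProductSpace ℂ H] [CompleteSpace H]
    (C : Fin (r + s) → (H →L[ℂ] H))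
    (hcomm : ∀ i j, C i * C j = C j * C i)
    (hnormal : ∀ i, C i * star (C i) = star (C i) * C i)
    (horder : ∀ i, C i ^ d = 1)
    (hsat : ∀ i, mvEval (fun t => C (z i t)) (PR i) = 1) :
    mvEval (fun j : Fin r => C (Fin.castAdd s j)) P = 1 :=
  stmt16_general d r s m hd ar Rel z R hR PR hPR P hP C hcomm horder hsat
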